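/- arXiv:2303.04379 — 2 statements merged into one kernel-verified Lean document; each statement's English description precedes it below -/
import Mathlib

section
/- Let (X, Y) be a pair of random variables with values in 𝒳 × ℝ such that for almost every x, the conditional distribution of Y given X = x is absolutely continuous with respect to Lebesgue measure with density bounded by K_p. Then for every δ ∈ [0,1] and all measurable l, l' : 𝒳 → ℝ with the relevant integrals finite: E[L(l(X), Y)] − E[L(l'(X), Y)] ≥ E[(l(X) − l'(X))·((1 − δ) − 1{l(X) ≤ Y})] − K_p·E[(l(X) − l'(X))²]. -/
/-!
The pinball loss is convex in `l` with subgradient `pinballScore δ l y`, so the remainder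
`L(b, y) - L(a, y) - (b - a) s(a, y)` is nonnegative; it is at most `|a - b|`, and vanishes unless
`y` lies between `a` and `b`. A conditional density bounded by `K` gives that event probability at
most `K |a - b|`, so conditionally on `X` the remainder has mean at most `K (a - b)²`; integrating
over `X` gives the claim.
-/

open MeasureTheory ProbabilityTheory

noncomputable def pinballLoss (δ l y : ℝ) : ℝ := (1 - δ) * l - min (l - y) 0

noncomputable def pinballScore (δ l y : ℝ) : ℝ := (1 - δ) - if l ≤ y then 1 else 0

theorem pinballLoss_add_mul_pinballScore_le (δ a b y : ℝ) :
    pinballLoss δ a y + (b - a) * pinballScore δ a y ≤ pinballLoss δ b y := by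
  unfold pinballLoss pinballScore
  split_ifs <;> grind

theorem pinballLoss_le_add_mul_pinballScore_add_indicator (δ a b y : ℝ) :
    pinballLoss δ b y ≤ pinballLoss δ a y + (b - a) * pinballScore δ a y
      + |a - b| * (Set.Ico (min a b) (max a b)).indicator 1 y := by
  unfold pinballLoss pinballScore
  by_cases hy : y ∈ Set.Ico (min a b) (max a b)
  · rw [Set.indicator_of_mem hy, Pi.one_apply, mul_one]
    split_ifs <;> grind
  · rw [Set.indicator_of_notMem hy, mul_zero]
    split_ifs <;> grind

theorem measurable_pinballLoss (δ a : ℝ) : Measurable (pinballLoss δ a) := by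
  unfold pinballLoss; fun_prop

theorem measurable_pinballScore (δ a : ℝ) : Measurable (pinballScore δ a) :=
  measurable_const.sub (measurable_const.ite measurableSet_Ici measurable_const)

theorem MeasureTheory.Measure.apply_le_mul_of_ae_rnDeriv_le {α : Type*} [MeasurableSpace α]
    {ν μ : Measure α} [ν.HaveLebesgueDecomposition μ] [SFinite μ] (hνμ : ν ≪ μ) {c : ENNReal}
    (hc : ∀ᵐ x ∂μ, ν.rnDeriv μ x ≤ c) (s : Set α) : ν s ≤ c * μ s :=
  calc ν s = ∫⁻ x in s, ν.rnDeriv μ x ∂μ := (Measure.setLIntegral_rnDeriv hνμ s).symm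
    _ ≤ ∫⁻ _ in s, c ∂μ := lintegral_mono_ae (ae_restrict_of_ae hc)
    _ = c * μ s := setLIntegral_const s c

theorem integral_pinballLoss_remainder_nonneg {ν : Measure ℝ} [IsProbabilityMeasure ν]
    (hac : ν ≪ volume) {K : ℝ} (hK : 0 ≤ K)
    (hbd : ∀ᵐ y ∂volume, ν.rnDeriv volume y ≤ ENNReal.ofReal K) (δ a b : ℝ) :
    0 ≤ ∫ y, (pinballLoss δ a y - pinballLoss δ b y - (a - b) * pinballScore δ a y
      + K * (a - b) ^ 2) ∂ν := by
  set I := Set.Ico (min a b) (max a b)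
  set r := fun y => pinballLoss δ a y - pinballLoss δ b y - (a - b) * pinballScore δ a y
  have hr_le : ∀ y, r y ≤ 0 := fun y => by
    linarith [pinballLoss_add_mul_pinballScore_le δ a b y]
  have hr_ge : ∀ y, -(|a - b| * I.indicator 1 y) ≤ r y := fun y => by
    linarith [pinballLoss_le_add_mul_pinballScore_add_indicator δ a b y]
  have hνI : ν.real I ≤ K * |a - b| := by
    have h := Measure.apply_le_mul_of_ae_rnDeriv_le hac hbd I
    rw [Real.volume_Ico, max_sub_min_eq_abs', ← ENNReal.ofReal_mul hK] at h
    exact ENNReal.toReal_le_of_le_ofReal (by positivity) h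
  have hind : Integrable (fun y => |a - b| * I.indicator 1 y) ν :=
    ((integrable_const 1).indicator measurableSet_Ico).const_mul _
  have hr : Integrable r ν := by
    refine hind.mono' ?_ (ae_of_all _ fun y => ?_)
    · exact (((measurable_pinballLoss δ a).sub (measurable_pinballLoss δ b)).sub
        ((measurable_pinballScore δ a).const_mul _)).aestronglyMeasurable
    · rw [Real.norm_eq_abs, abs_of_nonpos (hr_le y)]
      linarith [hr_ge y]
  calc 0 = -(|a - b| * (K * |a - b|)) + K * (a - b) ^ 2 := by rw [← sq_abs]; ring
    _ ≤ -(|a - b| * ν.real I) + K * (a - b) ^ 2 := by gcongr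
    _ = ∫ y, -(|a - b| * I.indicator 1 y) ∂ν + K * (a - b) ^ 2 := by
      rw [integral_neg, integral_const_mul, integral_indicator_one measurableSet_Ico]
    _ ≤ ∫ y, r y ∂ν + K * (a - b) ^ 2 :=
      add_le_add_left (integral_mono hind.neg hr hr_ge) _
    _ = ∫ y, (r y + K * (a - b) ^ 2) ∂ν := by
      rw [integral_add hr (integrable_const _), integral_const, probReal_univ, one_smul]

theorem pinball_potential_smooth_general {𝒳 : Type*} [MeasurableSpace 𝒳]
    (μ : Measure (𝒳 × ℝ)) [IsProbabilityMeasure μ]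
    (κy : Kernel 𝒳 ℝ) [IsMarkovKernel κy]
    (hdecomp : μ = μ.fst ⊗ₘ κy)
    (Kp : ℝ) (hKp : 0 < Kp)
    (hdensity : ∀ᵐ x ∂μ.fst, κy x ≪ (volume : Measure ℝ) ∧
      ∀ᵐ y ∂(volume : Measure ℝ),
        (κy x).rnDeriv volume y ≤ ENNReal.ofReal Kp)
    (δ : ℝ)
    (l l' : 𝒳 → ℝ)
    (hint1 : Integrable (fun q : 𝒳 × ℝ => (1 - δ) * l q.1 - min (l q.1 - q.2) 0) μ)
    (hint2 : Integrable (fun q : 𝒳 × ℝ => (1 - δ) * l' q.1 - min (l' q.1 - q.2) 0) μ)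
    (hint3 : Integrable (fun q : 𝒳 × ℝ =>
      (l q.1 - l' q.1) * ((1 - δ) - if l q.1 ≤ q.2 then (1 : ℝ) else 0)) μ)
    (hint4 : Integrable (fun q : 𝒳 × ℝ => (l q.1 - l' q.1) ^ 2) μ) :
    (∫ q, ((1 - δ) * l q.1 - min (l q.1 - q.2) 0) ∂μ)
        - (∫ q, ((1 - δ) * l' q.1 - min (l' q.1 - q.2) 0) ∂μ)
      ≥ (∫ q, (l q.1 - l' q.1) * ((1 - δ) - if l q.1 ≤ q.2 then (1 : ℝ) else 0) ∂μ)
        - Kp * ∫ q, (l q.1 - l' q.1) ^ 2 ∂μ := by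
  set F := fun q : 𝒳 × ℝ => pinballLoss δ (l q.1) q.2 - pinballLoss δ (l' q.1) q.2
      - (l q.1 - l' q.1) * pinballScore δ (l q.1) q.2 + Kp * (l q.1 - l' q.1) ^ 2
  have hF : Integrable F μ := ((hint1.sub hint2).sub hint3).add (hint4.const_mul Kp)
  have hF_nonneg : 0 ≤ ∫ q, F q ∂μ := by
    rw [hdecomp] at hF ⊢
    rw [Measure.integral_compProd hF]
    refine integral_nonneg_of_ae ?_
    filter_upwards [hdensity] with x ⟨hac, hbd⟩
    exact integral_pinballLoss_remainder_nonneg hac hKp.le hbd δ (l x) (l' x)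
  have hF_eq : ∫ q, F q ∂μ = (∫ q, ((1 - δ) * l q.1 - min (l q.1 - q.2) 0) ∂μ)
      - (∫ q, ((1 - δ) * l' q.1 - min (l' q.1 - q.2) 0) ∂μ)
      - (∫ q, (l q.1 - l' q.1) * ((1 - δ) - if l q.1 ≤ q.2 then (1 : ℝ) else 0) ∂μ)
      + Kp * ∫ q, (l q.1 - l' q.1) ^ 2 ∂μ := by
    simp only [F, pinballLoss, pinballScore]
    rw [integral_add ?_ (hint4.const_mul Kp), integral_sub ?_ hint3, integral_sub hint1 hint2,
      integral_const_mul]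
    exacts [hint1.sub hint2, (hint1.sub hint2).sub hint3]
  linarith

/-- Smoothness-like potential property of the pinball-type potential
`L(l, y) = (1 - δ)·l - min(l - y, 0)`: if the conditional distribution of `Y` given
`X = x` has Lebesgue density bounded by `K_p` (for a.e. `x`), then
`E[L(l(X),Y)] - E[L(l'(X),Y)] ≥ E[(l(X) - l'(X))·((1-δ) - 1{l(X) ≤ Y})]
  - K_p · E[(l(X) - l'(X))²]`. -/
theorem pinball_potential_smooth {𝒳 : Type*} [MeasurableSpace 𝒳]
    (μ : Measure (𝒳 × ℝ)) [IsProbabilityMeasure μ]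
    (κy : Kernel 𝒳 ℝ) [IsMarkovKernel κy]
    (hdecomp : μ = μ.fst ⊗ₘ κy)
    (Kp : ℝ) (hKp : 0 < Kp)
    (hdensity : ∀ᵐ x ∂μ.fst, κy x ≪ (volume : Measure ℝ) ∧
      ∀ᵐ y ∂(volume : Measure ℝ),
        (κy x).rnDeriv volume y ≤ ENNReal.ofReal Kp)
    (δ : ℝ) (hδ : δ ∈ Set.Icc (0 : ℝ) 1)
    (l l' : 𝒳 → ℝ) (hl : Measurable l) (hl' : Measurable l')
    (hint1 : Integrable (fun q : 𝒳 × ℝ => (1 - δ) * l q.1 - min (l q.1 - q.2) 0) μ)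
    (hint2 : Integrable (fun q : 𝒳 × ℝ => (1 - δ) * l' q.1 - min (l' q.1 - q.2) 0) μ)
    (hint3 : Integrable (fun q : 𝒳 × ℝ =>
      (l q.1 - l' q.1) * ((1 - δ) - if l q.1 ≤ q.2 then (1 : ℝ) else 0)) μ)
    (hint4 : Integrable (fun q : 𝒳 × ℝ => (l q.1 - l' q.1) ^ 2) μ) :
    (∫ q, ((1 - δ) * l q.1 - min (l q.1 - q.2) 0) ∂μ)
        - (∫ q, ((1 - δ) * l' q.1 - min (l' q.1 - q.2) 0) ∂μ)
      ≥ (∫ q, (l q.1 - l' q.1) * ((1 - δ) - if l q.1 ≤ q.2 then (1 : ℝ) else 0) ∂μ)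
        - Kp * ∫ q, (l q.1 - l' q.1) ^ 2 ∂μ :=
  pinball_potential_smooth_general μ κy hdecomp Kp hKp hdensity δ l l' hint1 hint2 hint3 hint4
end

section
/- Let μ be a probability measure on 𝒳 × [0,1] (the source distribution of (x, y)), let m(x) = E[y | x] be the conditional mean, and let f, p : 𝒳 → [0,1] be measurable. Let e, σ : 𝒳 → ℝ be measurable with c₁ ≤ σ(x), e(x) ≤ c₂ for constants 0 < c₁ < c₂ < 1, set w_e(x) = (1 − e(x))/e(x), w_σ(x) = (1 − σ(x))/σ(x), B = (1 − c₁)/c₁, β₁(p) = √(E[(p(x) − m(x))⁴]) and β₂(σ) = √(E[(w_σ(x) − w_e(x))⁴]). If |E[w_σ(x)·(f(x) − p(x))·(f(x) − y)]| ≤ α, then |E[w_e(x)·(f(x) − m(x))·(f(x) − y)]| ≤ α + √(2B²·β₁(p) + 2·β₂(σ)). -/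
open MeasureTheory ProbabilityTheory
open scoped ENNReal

/-!
Write `u = w_e`, `v = w_σ` and `r = f - y`. Pointwise
`u (f - m) r = v (f - p) r + r Z` with `Z = u (p - m) + (u - v) (f - p)`.
The first term is the calibration hypothesis. Since `|r| ≤ 1`, Jensen bounds the second by
`√E[(r Z)²] ≤ √E[Z²]`, and `|u| ≤ B`, `|f - p| ≤ 1` give
`E[Z²] ≤ 2B² E[(p - m)²] + 2 E[(u - v)²]`; finally `E[g²] ≤ √E[g⁴]` on a probability space.
-/

section ProbabilitySpace

variable {Ω : Type*} [MeasurableSpace Ω] {μ : Measure Ω}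

theorem sq_integral_le_integral_sq [IsProbabilityMeasure μ] {g : Ω → ℝ} (hg : MemLp g 2 μ) :
    (∫ ω, g ω ∂μ) ^ 2 ≤ ∫ ω, g ω ^ 2 ∂μ := by
  have h := variance_nonneg g μ
  rw [variance_eq_sub hg] at h
  simpa using h

theorem abs_integral_le_sqrt_integral_sq [IsProbabilityMeasure μ] {g : Ω → ℝ}
    (hg : MemLp g 2 μ) :
    |∫ ω, g ω ∂μ| ≤ √(∫ ω, g ω ^ 2 ∂μ) :=
  Real.abs_le_sqrt (sq_integral_le_integral_sq hg)

theorem integral_sq_le_sqrt_integral_pow_four [IsProbabilityMeasure μ] {g : Ω → ℝ}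
    (hg : MemLp g 4 μ) :
    ∫ ω, g ω ^ 2 ∂μ ≤ √(∫ ω, g ω ^ 4 ∂μ) := by
  have hg4 : Integrable (fun ω => g ω ^ 4) μ := by
    simpa [Real.norm_eq_abs, Even.pow_abs (by decide : Even 4)] using hg.integrable_norm_pow'
  have hg2 : MemLp (fun ω => g ω ^ 2) 2 μ :=
    (memLp_two_iff_integrable_sq (hg.1.pow 2)).2 (by simpa [← pow_mul] using hg4)
  simpa [← pow_mul] using (le_abs_self _).trans (abs_integral_le_sqrt_integral_sq hg2)

theorem abs_integral_mul_le_sqrt_integral_sq [IsProbabilityMeasure μ] {r Z : Ω → ℝ}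
    (hr : AEStronglyMeasurable r μ) (hr1 : ∀ᵐ ω ∂μ, |r ω| ≤ 1) (hZ : MemLp Z 2 μ) :
    |∫ ω, r ω * Z ω ∂μ| ≤ √(∫ ω, Z ω ^ 2 ∂μ) := by
  have hrZ : MemLp (fun ω => r ω * Z ω) 2 μ :=
    hZ.mul' (memLp_top_of_bound hr 1 (by simpa using hr1))
  refine (abs_integral_le_sqrt_integral_sq hrZ).trans (Real.sqrt_le_sqrt ?_)
  refine integral_mono_ae hrZ.integrable_sq hZ.integrable_sq ?_
  filter_upwards [hr1] with ω hω
  rw [mul_pow]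
  exact mul_le_of_le_one_left (sq_nonneg _) ((sq_le_one_iff_abs_le_one _).2 hω)

theorem memLp_two_mul_add_sub_mul [IsFiniteMeasure μ] {u v a b : Ω → ℝ}
    (hu : MemLp u ∞ μ) (hb : MemLp b ∞ μ) (ha : MemLp a 4 μ) (hv : MemLp v 4 μ) :
    MemLp (fun ω => u ω * a ω + (u ω - v ω) * b ω) 2 μ := by
  have h42 : (2 : ℝ≥0∞) ≤ 4 := by norm_num
  exact ((ha.mono_exponent h42).mul' hu).add
    (hb.mul' ((hu.mono_exponent le_top).sub (hv.mono_exponent h42)))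

theorem integral_sq_mul_add_mul_le [IsProbabilityMeasure μ] {u v a b : Ω → ℝ} {B : ℝ}
    (hu : AEStronglyMeasurable u μ) (huB : ∀ᵐ ω ∂μ, |u ω| ≤ B)
    (hb : AEStronglyMeasurable b μ) (hb1 : ∀ᵐ ω ∂μ, |b ω| ≤ 1)
    (ha : MemLp a 4 μ) (hv : MemLp v 4 μ) :
    ∫ ω, (u ω * a ω + (u ω - v ω) * b ω) ^ 2 ∂μ
      ≤ 2 * B ^ 2 * √(∫ ω, a ω ^ 4 ∂μ) + 2 * √(∫ ω, (v ω - u ω) ^ 4 ∂μ) := by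
  have hu' : MemLp u ∞ μ := memLp_top_of_bound hu B (by simpa using huB)
  have hb' : MemLp b ∞ μ := memLp_top_of_bound hb 1 (by simpa using hb1)
  have hvu : MemLp (fun ω => v ω - u ω) 4 μ := hv.sub (hu'.mono_exponent le_top)
  have ha2 : MemLp a 2 μ := ha.mono_exponent (by norm_num : (2 : ℝ≥0∞) ≤ 4)
  have hZ := memLp_two_mul_add_sub_mul hu' hb' ha hv
  have hvu2 : Integrable (fun ω => (v ω - u ω) ^ 2) μ :=
    (hvu.mono_exponent (by norm_num : (2 : ℝ≥0∞) ≤ 4)).integrable_sq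
  calc ∫ ω, (u ω * a ω + (u ω - v ω) * b ω) ^ 2 ∂μ
      ≤ ∫ ω, (2 * B ^ 2 * a ω ^ 2 + 2 * (v ω - u ω) ^ 2) ∂μ := by
        refine integral_mono_ae hZ.integrable_sq
          ((ha2.integrable_sq.const_mul _).add (hvu2.const_mul _)) ?_
        filter_upwards [huB, hb1] with ω huω hbω
        have hu2 : u ω ^ 2 ≤ B ^ 2 := sq_le_sq' (abs_le.1 huω).1 (abs_le.1 huω).2
        have hb2 : b ω ^ 2 ≤ 1 := (sq_le_one_iff_abs_le_one _).2 hbω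
        nlinarith [add_sq_le (a := u ω * a ω) (b := (u ω - v ω) * b ω),
          mul_le_mul_of_nonneg_right hu2 (sq_nonneg (a ω)),
          mul_le_mul_of_nonneg_left hb2 (sq_nonneg (u ω - v ω))]
    _ = 2 * B ^ 2 * ∫ ω, a ω ^ 2 ∂μ + 2 * ∫ ω, (v ω - u ω) ^ 2 ∂μ := by
        rw [integral_add (ha2.integrable_sq.const_mul _) (hvu2.const_mul _),
          integral_const_mul, integral_const_mul]
    _ ≤ 2 * B ^ 2 * √(∫ ω, a ω ^ 4 ∂μ) + 2 * √(∫ ω, (v ω - u ω) ^ 4 ∂μ) := by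
        gcongr
        exacts [integral_sq_le_sqrt_integral_pow_four ha,
          integral_sq_le_sqrt_integral_pow_four hvu]

theorem abs_integral_mul_add_mul_le_of_abs_integral_le [IsProbabilityMeasure μ]
    {r a b u v : Ω → ℝ} {B α : ℝ}
    (hr : AEStronglyMeasurable r μ) (hr1 : ∀ᵐ ω ∂μ, |r ω| ≤ 1)
    (hb : AEStronglyMeasurable b μ) (hb1 : ∀ᵐ ω ∂μ, |b ω| ≤ 1)
    (hu : AEStronglyMeasurable u μ) (huB : ∀ᵐ ω ∂μ, |u ω| ≤ B)
    (ha : MemLp a 4 μ) (hv : MemLp v 4 μ) (hcal : |∫ ω, v ω * b ω * r ω ∂μ| ≤ α) :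
    |∫ ω, u ω * (b ω + a ω) * r ω ∂μ|
      ≤ α + √(2 * B ^ 2 * √(∫ ω, a ω ^ 4 ∂μ) + 2 * √(∫ ω, (v ω - u ω) ^ 4 ∂μ)) := by
  have hr' : MemLp r ∞ μ := memLp_top_of_bound hr 1 (by simpa using hr1)
  have hu' : MemLp u ∞ μ := memLp_top_of_bound hu B (by simpa using huB)
  have hb' : MemLp b ∞ μ := memLp_top_of_bound hb 1 (by simpa using hb1)
  have hvbr : Integrable (fun ω => v ω * b ω * r ω) μ :=
    (hr'.mul' (hb'.mul' hv : MemLp (fun ω => v ω * b ω) 4 μ)).integrable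
      (by norm_num : (1 : ℝ≥0∞) ≤ 4)
  have hZ := memLp_two_mul_add_sub_mul hu' hb' ha hv
  have hrZ : Integrable (fun ω => r ω * (u ω * a ω + (u ω - v ω) * b ω)) μ :=
    (hZ.mul' hr').integrable one_le_two
  calc |∫ ω, u ω * (b ω + a ω) * r ω ∂μ|
      = |∫ ω, v ω * b ω * r ω ∂μ + ∫ ω, r ω * (u ω * a ω + (u ω - v ω) * b ω) ∂μ| := by
        rw [← integral_add hvbr hrZ]
        congr 2 with ω
        ring
    _ ≤ |∫ ω, v ω * b ω * r ω ∂μ|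
          + |∫ ω, r ω * (u ω * a ω + (u ω - v ω) * b ω) ∂μ| := abs_add_le _ _
    _ ≤ α + √(∫ ω, (u ω * a ω + (u ω - v ω) * b ω) ^ 2 ∂μ) :=
        add_le_add hcal (abs_integral_mul_le_sqrt_integral_sq hr hr1 hZ)
    _ ≤ α + √(2 * B ^ 2 * √(∫ ω, a ω ^ 4 ∂μ) + 2 * √(∫ ω, (v ω - u ω) ^ 4 ∂μ)) := by
        gcongr
        exact integral_sq_mul_add_mul_le hu huB hb hb1 ha hv

end ProbabilitySpace

theorem ae_integral_mem_Icc_of_ae_compProd {X : Type*} [MeasurableSpace X] {ν : Measure X}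
    [SFinite ν] {κ : Kernel X ℝ} [IsMarkovKernel κ] {a b : ℝ}
    (h : ∀ᵐ q ∂(ν ⊗ₘ κ), q.2 ∈ Set.Icc a b) : ∀ᵐ x ∂ν, ∫ y, y ∂κ x ∈ Set.Icc a b := by
  filter_upwards [Measure.ae_ae_of_ae_compProd h] with x hx
  refine (convex_Icc a b).integral_mem isClosed_Icc hx
    (Integrable.of_bound aestronglyMeasurable_id (max |a| |b|) ?_)
  filter_upwards [hx] with y hy
  exact abs_le_max_abs_abs hy.1 hy.2

theorem abs_one_sub_div_le {c t : ℝ} (hc : 0 < c) (hct : c ≤ t) (ht : t ≤ 1) :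
    |(1 - t) / t| ≤ (1 - c) / c := by
  rw [abs_of_nonneg (div_nonneg (sub_nonneg.2 ht) (hc.trans_le hct).le)]
  exact div_le_div₀ (sub_nonneg.2 (hct.trans ht)) (by linarith) hc hct

theorem universally_adaptive_predictor_general {𝒳 : Type*} [MeasurableSpace 𝒳]
    (μ : Measure (𝒳 × ℝ)) [IsProbabilityMeasure μ]
    (hy01 : ∀ᵐ q ∂μ, q.2 ∈ Set.Icc (0 : ℝ) 1)
    (κy : Kernel 𝒳 ℝ) [IsMarkovKernel κy]
    (hdecomp : μ = μ.fst ⊗ₘ κy)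
    (m : 𝒳 → ℝ) (hm : ∀ x, m x = ∫ y, y ∂(κy x))
    (f p : 𝒳 → ℝ) (hf : Measurable f) (hp : Measurable p)
    (hf01 : ∀ x, f x ∈ Set.Icc (0 : ℝ) 1) (hp01 : ∀ x, p x ∈ Set.Icc (0 : ℝ) 1)
    (e σ : 𝒳 → ℝ) (he : Measurable e) (hσ : Measurable σ)
    (c₁ c₂ : ℝ) (hc₁ : 0 < c₁) (hc₂ : c₂ < 1)
    (hebd : ∀ x, e x ∈ Set.Icc c₁ c₂) (hσbd : ∀ x, σ x ∈ Set.Icc c₁ c₂)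
    (α : ℝ)
    (hcal : |∫ q, ((1 - σ q.1) / σ q.1) * (f q.1 - p q.1) * (f q.1 - q.2) ∂μ| ≤ α) :
    |∫ q, ((1 - e q.1) / e q.1) * (f q.1 - m q.1) * (f q.1 - q.2) ∂μ|
      ≤ α + Real.sqrt
          (2 * ((1 - c₁) / c₁) ^ 2 * Real.sqrt (∫ q, (p q.1 - m q.1) ^ 4 ∂μ)
            + 2 * Real.sqrt
                (∫ q, ((1 - σ q.1) / σ q.1 - (1 - e q.1) / e q.1) ^ 4 ∂μ)) := by
  have habs_sub : ∀ {s t : ℝ}, s ∈ Set.Icc 0 1 → t ∈ Set.Icc 0 1 → |s - t| ≤ 1 := fun hs ht => by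
    simpa [Real.dist_eq] using Real.dist_le_of_mem_Icc_01 hs ht
  have hweight : ∀ {t}, t ∈ Set.Icc c₁ c₂ → |(1 - t) / t| ≤ (1 - c₁) / c₁ := fun ht =>
    abs_one_sub_div_le hc₁ ht.1 (ht.2.trans hc₂.le)
  have hm_meas : Measurable m := by
    rw [funext hm]
    exact stronglyMeasurable_id.integral_kernel.measurable
  have hm01 : ∀ᵐ q ∂μ, m q.1 ∈ Set.Icc (0 : ℝ) 1 := by
    simp only [hm]
    exact ae_of_ae_map measurable_fst.aemeasurable
      (ae_integral_mem_Icc_of_ae_compProd (hdecomp ▸ hy01))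
  have key := abs_integral_mul_add_mul_le_of_abs_integral_le (μ := μ) (B := (1 - c₁) / c₁)
    (r := fun q => f q.1 - q.2) (a := fun q => p q.1 - m q.1) (b := fun q => f q.1 - p q.1)
    (u := fun q => (1 - e q.1) / e q.1) (v := fun q => (1 - σ q.1) / σ q.1)
    (by fun_prop) (by filter_upwards [hy01] with q hq using habs_sub (hf01 q.1) hq)
    (by fun_prop) (ae_of_all _ fun q => habs_sub (hf01 q.1) (hp01 q.1))
    (Measurable.aestronglyMeasurable (by fun_prop)) (ae_of_all _ fun q => hweight (hebd q.1))
    (MemLp.of_bound (by fun_prop) 1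
      (by filter_upwards [hm01] with q hq using habs_sub (hp01 q.1) hq))
    (MemLp.of_bound (Measurable.aestronglyMeasurable (by fun_prop)) _
      (ae_of_all _ fun q => hweight (hσbd q.1))) hcal
  simpa only [sub_add_sub_cancel] using key

/-- Universally adaptive predictor under ℓ₂ loss (Theorem 5.1): multicalibration of `f`
on the source against the auditor `w_σ(x)·(f(x) - p(x))` transfers to a bound on the
propensity-reweighted estimation error `E[w_e(x)(f(x) - m(x))(f(x) - y)]`, up to
the approximation errors `β₁(p)` and `β₂(σ)`. -/
theorem universally_adaptive_predictor {𝒳 : Type*} [MeasurableSpace 𝒳]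
    (μ : Measure (𝒳 × ℝ)) [IsProbabilityMeasure μ]
    (hy01 : ∀ᵐ q ∂μ, q.2 ∈ Set.Icc (0 : ℝ) 1)
    (κy : Kernel 𝒳 ℝ) [IsMarkovKernel κy]
    (hdecomp : μ = μ.fst ⊗ₘ κy)
    (m : 𝒳 → ℝ) (hm : ∀ x, m x = ∫ y, y ∂(κy x))
    (f p : 𝒳 → ℝ) (hf : Measurable f) (hp : Measurable p)
    (hf01 : ∀ x, f x ∈ Set.Icc (0 : ℝ) 1) (hp01 : ∀ x, p x ∈ Set.Icc (0 : ℝ) 1)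
    (e σ : 𝒳 → ℝ) (he : Measurable e) (hσ : Measurable σ)
    (c₁ c₂ : ℝ) (hc₁ : 0 < c₁) (hc₁₂ : c₁ < c₂) (hc₂ : c₂ < 1)
    (hebd : ∀ x, e x ∈ Set.Icc c₁ c₂) (hσbd : ∀ x, σ x ∈ Set.Icc c₁ c₂)
    (α : ℝ) (hα : 0 < α)
    (hcal : |∫ q, ((1 - σ q.1) / σ q.1) * (f q.1 - p q.1) * (f q.1 - q.2) ∂μ| ≤ α) :
    |∫ q, ((1 - e q.1) / e q.1) * (f q.1 - m q.1) * (f q.1 - q.2) ∂μ|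
      ≤ α + Real.sqrt
          (2 * ((1 - c₁) / c₁) ^ 2 * Real.sqrt (∫ q, (p q.1 - m q.1) ^ 4 ∂μ)
            + 2 * Real.sqrt
                (∫ q, ((1 - σ q.1) / σ q.1 - (1 - e q.1) / e q.1) ^ 4 ∂μ)) :=
  universally_adaptive_predictor_general μ hy01 κy hdecomp m hm f p hf hp hf01 hp01 e σ he hσ c₁ c₂
    hc₁ hc₂ hebd hσbd α hcal
end
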